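/- For every (x¹,x²) ∈ ℝ² one has f(x¹,x²) = Σ_{m=0}^{|n|−1} Σ_{k∈ℤ} e^{2πi(nk+m)x¹} f_m(x²+k), and the double series converges absolutely. -/

import Mathlib

open Real Complex MeasureTheory intervalIntegral
open scoped ContDiff


private lemma one_le_inf : (1 : WithTop ℕ∞) ≤ ∞ := by exact_mod_cast le_top

noncomputable def perLift (g : ℝ → ℂ) (h : Function.Periodic g 1) (hc : Continuous g) :
    C(UnitAddCircle, ℂ) := ⟨h.lift, continuous_coinduced_dom.mpr hc⟩

lemma fourierCoeff_perLift (g : ℝ → ℂ) (h : Function.Periodic g 1) (hc : Continuous g) (j : ℤ) :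
    fourierCoeff (perLift g h hc : UnitAddCircle → ℂ) j
      = ∫ t in (0:ℝ)..1, Complex.exp (-(2 * Real.pi * Complex.I * (j : ℂ) * (t : ℂ))) * g t := by
  rw [fourierCoeff_eq_intervalIntegral _ j 0]
  have heq : Set.EqOn
      (fun t : ℝ => (fourier (-j) (t : UnitAddCircle)) • (perLift g h hc : UnitAddCircle → ℂ) t)
      (fun t : ℝ => Complex.exp (-(2 * Real.pi * Complex.I * (j : ℂ) * (t : ℂ))) * g t)
      (Set.uIcc 0 1) := by
    intro t _
    simp only [perLift, ContinuousMap.coe_mk, Function.Periodic.lift_coe, fourier_coe_apply,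
      smul_eq_mul]
    congr 2
    push_cast
    ring
  rw [zero_add, intervalIntegral.integral_congr heq]
  norm_num

lemma fourierCoeffOn_eq_my (g : ℝ → ℂ) (j : ℤ) :
    fourierCoeffOn zero_lt_one g j
      = ∫ t in (0:ℝ)..1, Complex.exp (-(2 * Real.pi * Complex.I * (j : ℂ) * (t : ℂ))) * g t := by
  rw [fourierCoeffOn_eq_integral]
  have heq : Set.EqOn
      (fun t : ℝ => (fourier (-j) (t : AddCircle ((1:ℝ) - 0))) • g t)
      (fun t : ℝ => Complex.exp (-(2 * Real.pi * Complex.I * (j : ℂ) * (t : ℂ))) * g t)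
      (Set.uIcc 0 1) := by
    intro t _
    simp only [fourier_coe_apply, smul_eq_mul]
    congr 2
    push_cast
    ring
  rw [intervalIntegral.integral_congr heq]
  norm_num

lemma periodic_deriv' (g : ℝ → ℂ) (hp : Function.Periodic g 1) :
    Function.Periodic (deriv g) 1 := by
  intro x
  have h1 : (fun y => g (y + 1)) = g := funext hp
  rw [← deriv_comp_add_const g 1 x, h1]

lemma coeff_ibp (g : ℝ → ℂ) (hg : ContDiff ℝ ∞ g) (hp : Function.Periodic g 1) (j : ℤ)
    (hj : j ≠ 0) :
    fourierCoeffOn zero_lt_one g j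
      = fourierCoeffOn zero_lt_one (deriv g) j / (2 * Real.pi * Complex.I * j) := by
  rw [fourierCoeffOn_of_hasDerivAt zero_lt_one hj
    (fun x _ => (hg.differentiable (by simp) x).hasDerivAt)
    ((hg.continuous_deriv one_le_inf).intervalIntegrable 0 1)]
  have h10 : g 1 = g 0 := by simpa using hp 0
  rw [h10, sub_self, mul_zero, zero_sub]
  have hπ : (2 * Real.pi * Complex.I * (j:ℂ)) ≠ 0 := by
    simp [Real.pi_ne_zero, Complex.I_ne_zero, hj]
  field_simp
  norm_num

lemma coeff_bound (g : ℝ → ℂ) (hg : ContDiff ℝ ∞ g) :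
    ∃ B : ℝ, ∀ j : ℤ, ‖fourierCoeffOn zero_lt_one g j‖ ≤ B := by
  obtain ⟨B, hB⟩ := (isCompact_Icc (a := (0:ℝ)) (b := 1)).exists_bound_of_continuousOn
    hg.continuous.continuousOn
  refine ⟨B, fun j => ?_⟩
  rw [fourierCoeffOn_eq_my]
  have h1 : ‖∫ t in (0:ℝ)..1,
      Complex.exp (-(2 * Real.pi * Complex.I * (j : ℂ) * (t : ℂ))) * g t‖ ≤ B * |(1:ℝ) - 0| := by
    apply intervalIntegral.norm_integral_le_of_norm_le_const
    intro t ht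
    rw [norm_mul]
    have he : ‖Complex.exp (-(2 * Real.pi * Complex.I * (j : ℂ) * (t : ℂ)))‖ = 1 := by
      rw [Complex.norm_exp]
      norm_num
    rw [he, one_mul]
    exact hB t (Set.mem_Icc_of_Ioc (by rwa [Set.uIoc_of_le zero_le_one] at ht))
  simpa using h1

lemma norm_two_pi_I_j (j : ℤ) :
    ‖(2 * Real.pi * Complex.I * (j:ℂ))‖ = 2 * Real.pi * |(j:ℝ)| := by
  simp only [norm_mul, Complex.norm_I, Complex.norm_ofNat, mul_one, Complex.norm_real,
    Real.norm_eq_abs, abs_of_pos Real.pi_pos, Complex.norm_intCast, Int.cast_abs]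

lemma smooth_periodic_fourier (g : ℝ → ℂ) (hg : ContDiff ℝ ∞ g) (hp : Function.Periodic g 1)
    (x : ℝ) :
    HasSum (fun j : ℤ =>
      (∫ t in (0:ℝ)..1, Complex.exp (-(2 * Real.pi * Complex.I * (j : ℂ) * (t : ℂ))) * g t)
        * Complex.exp (2 * Real.pi * Complex.I * (j : ℂ) * (x : ℂ))) (g x) := by
  have hg' : ContDiff ℝ ∞ (deriv g) := (contDiff_infty_iff_deriv.mp hg).2
  have hg'' : ContDiff ℝ ∞ (deriv (deriv g)) := (contDiff_infty_iff_deriv.mp hg').2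
  have hp' := periodic_deriv' g hp
  obtain ⟨B, hB⟩ := coeff_bound (deriv (deriv g)) hg''
  have hco : ∀ j : ℤ, fourierCoeff (perLift g hp hg.continuous : UnitAddCircle → ℂ) j
      = fourierCoeffOn zero_lt_one g j := fun j => by
    rw [fourierCoeff_perLift, fourierCoeffOn_eq_my]
  have key : ∀ j : ℤ, j ≠ 0 → ‖fourierCoeffOn zero_lt_one g j‖
      ≤ (B / (2 * Real.pi) ^ 2) * (1 / (j:ℝ)^2) := by
    intro j hj
    rw [coeff_ibp g hg hp j hj, coeff_ibp _ hg' hp' j hj, div_div, norm_div]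
    have hnorm : ‖(2 * Real.pi * Complex.I * (j:ℂ)) * (2 * Real.pi * Complex.I * (j:ℂ))‖
        = (2 * Real.pi)^2 * (j:ℝ)^2 := by
      rw [norm_mul, norm_two_pi_I_j,
        show (2*Real.pi*|(j:ℝ)|)*(2*Real.pi*|(j:ℝ)|) = (2*Real.pi)^2 * |(j:ℝ)|^2 by ring, _root_.sq_abs ((j:ℝ))]
    rw [hnorm, div_le_iff₀ (by positivity)]
    calc ‖fourierCoeffOn zero_lt_one (deriv (deriv g)) j‖ ≤ B := hB j
      _ = (B / (2*Real.pi)^2) * (1/(j:ℝ)^2) * ((2*Real.pi)^2 * (j:ℝ)^2) := by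
          have : ((j:ℝ))^2 ≠ 0 := by positivity
          field_simp
  have summ : Summable (fun j : ℤ =>
      fourierCoeff (perLift g hp hg.continuous : UnitAddCircle → ℂ) j) := by
    apply Summable.of_norm_bounded_eventually (g := fun j : ℤ => (B / (2 * Real.pi) ^ 2) * (1 / (j:ℝ)^2))
    · exact (summable_one_div_int_pow.mpr one_lt_two).mul_left _
    · rw [Filter.eventually_cofinite]
      apply Set.Finite.subset (Set.finite_singleton (0:ℤ))
      intro j hj
      simp only [Set.mem_setOf_eq, not_le] at hj
      by_contra hj0
      simp only [Set.mem_singleton_iff] at hj0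
      exact absurd hj (not_lt.mpr (by rw [hco]; exact key j hj0))
  have HS := has_pointwise_sum_fourier_series_of_summable summ (x : UnitAddCircle)
  have hgx : (perLift g hp hg.continuous : UnitAddCircle → ℂ) (x : UnitAddCircle) = g x := by
    simp [perLift, Function.Periodic.lift_coe]
  rw [hgx] at HS
  convert HS using 2 with j
  rw [hco j, fourierCoeffOn_eq_my, fourier_coe_apply, smul_eq_mul]
  congr 1
  norm_num

lemma int_eq_zero_of_dvd_of_abs_lt {a b : ℤ} (h : b ∣ a) (h2 : |a| < |b|) : a = 0 := by
  by_contra ha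
  exact absurd (Int.le_of_dvd (abs_pos.mpr ha) ((abs_dvd _ _).mpr ((dvd_abs _ _).mpr h)))
    (not_le.mpr h2)

/-- The `j`-th Fourier coefficient `f_j(y) = ∫₀¹ e^{−2πi j x} f(x, y) dx`. -/
noncomputable def fourierCoef (f : ℝ × ℝ → ℂ) (j : ℤ) (y : ℝ) : ℂ :=
  ∫ x in (0:ℝ)..1, Complex.exp (-(2 * Real.pi * Complex.I * (j : ℂ) * (x : ℂ))) * f (x, y)

/-- For a smooth function `f` satisfying
`f(x¹+γ¹, x²+γ²) = e^{−2πi n x¹ γ²} f(x¹, x²)` for all `(γ¹,γ²) ∈ ℤ²`, one has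
`f(x¹,x²) = Σ_{m=0}^{|n|−1} Σ_{k∈ℤ} e^{2πi(nk+m)x¹} f_m(x²+k)`, the double series being
absolutely convergent. -/
theorem theta_expansion (n : ℤ) (hn : n ≠ 0) (f : ℝ × ℝ → ℂ) (hf : ContDiff ℝ (⊤ : ℕ∞) f)
    (hper : ∀ (x1 x2 : ℝ) (γ1 γ2 : ℤ), f (x1 + γ1, x2 + γ2)
      = Complex.exp (-(2 * Real.pi * Complex.I * (n : ℂ) * (x1 : ℂ) * (γ2 : ℂ))) * f (x1, x2)) :
    ∀ x1 x2 : ℝ,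
      (f (x1, x2) = ∑ m ∈ Finset.range n.natAbs, ∑' k : ℤ,
          Complex.exp (2 * Real.pi * Complex.I * ((n : ℂ) * (k : ℂ) + (m : ℂ)) * (x1 : ℂ))
            * fourierCoef f (m : ℤ) (x2 + (k : ℝ))) ∧
      (∀ m ∈ Finset.range n.natAbs, Summable (fun k : ℤ =>
          ‖Complex.exp (2 * Real.pi * Complex.I * ((n : ℂ) * (k : ℂ) + (m : ℂ)) * (x1 : ℂ))
            * fourierCoef f (m : ℤ) (x2 + (k : ℝ))‖)) := by
  intro x1 x2
  have shift : ∀ m k : ℤ, fourierCoef f m (x2 + (k:ℝ)) = fourierCoef f (n * k + m) x2 := by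
    intro m k
    unfold fourierCoef
    apply intervalIntegral.integral_congr
    intro t _
    simp only
    have h := hper t x2 0 k
    simp only [Int.cast_zero, add_zero] at h
    rw [h, ← mul_assoc, ← Complex.exp_add]
    congr 2
    push_cast
    ring
  have hgsm : ContDiff ℝ ∞ (fun t : ℝ => f (t, x2)) :=
    (hf.of_le (by simp)).comp (contDiff_id.prodMk contDiff_const)
  have hgper : Function.Periodic (fun t : ℝ => f (t, x2)) 1 := by
    intro t
    have h := hper t x2 1 0
    simpa using h
  have HS := smooth_periodic_fourier _ hgsm hgper x1
  have HSF : HasSum (fun j : ℤ =>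
      Complex.exp (2 * Real.pi * Complex.I * (j : ℂ) * (x1 : ℂ)) * fourierCoef f j x2)
      (f (x1, x2)) := by
    convert HS using 2 with j
    rw [mul_comm]
    rfl
  -- the reindexing equivalence
  have hbij : Function.Bijective (fun p : Fin n.natAbs × ℤ => n * p.2 + (p.1 : ℤ)) := by
    constructor
    · rintro ⟨m1, k1⟩ ⟨m2, k2⟩ h
      simp only at h
      have hm1 : ((m1 : ℕ) : ℤ) < (n.natAbs : ℤ) := by exact_mod_cast m1.isLt
      have hm2 : ((m2 : ℕ) : ℤ) < (n.natAbs : ℤ) := by exact_mod_cast m2.isLt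
      have hm1' : (0:ℤ) ≤ (m1 : ℕ) := Int.ofNat_nonneg _
      have hm2' : (0:ℤ) ≤ (m2 : ℕ) := Int.ofNat_nonneg _
      have hN : (n.natAbs : ℤ) = |n| := (Int.abs_eq_natAbs n).symm
      have hdvd : n ∣ ((m2 : ℕ) : ℤ) - ((m1 : ℕ) : ℤ) := ⟨k1 - k2, by linarith⟩
      have hz : ((m2 : ℕ) : ℤ) - ((m1 : ℕ) : ℤ) = 0 :=
        int_eq_zero_of_dvd_of_abs_lt hdvd (abs_lt.mpr ⟨by omega, by omega⟩)
      have hmm : m1 = m2 := by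
        apply Fin.ext
        omega
      subst hmm
      have : k1 = k2 := by
        have h' : n * k1 = n * k2 := by omega
        exact mul_left_cancel₀ hn h'
      rw [this]
    · intro j
      have h1 : 0 ≤ j % n := Int.emod_nonneg j hn
      have h2 : j % n < |n| := Int.emod_lt_abs j hn
      have hN : (n.natAbs : ℤ) = |n| := (Int.abs_eq_natAbs n).symm
      refine ⟨⟨⟨(j % n).toNat, by omega⟩, j / n⟩, ?_⟩
      simp only
      rw [Int.toNat_of_nonneg h1]
      exact Int.mul_ediv_add_emod j n
  let e : Fin n.natAbs × ℤ ≃ ℤ := Equiv.ofBijective _ hbij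
  set F : ℤ → ℂ := fun j =>
    Complex.exp (2 * Real.pi * Complex.I * (j : ℂ) * (x1 : ℂ)) * fourierCoef f j x2 with hF
  have HSe : HasSum (F ∘ e) (f (x1, x2)) := (Equiv.hasSum_iff e).mpr HSF
  have hterm : ∀ (m : Fin n.natAbs) (k : ℤ), (F ∘ e) (m, k)
      = Complex.exp (2 * Real.pi * Complex.I * ((n : ℂ) * (k : ℂ) + ((m:ℕ) : ℂ)) * (x1 : ℂ))
        * fourierCoef f ((m:ℕ) : ℤ) (x2 + (k : ℝ)) := by
    intro m k
    show F (n * k + (m : ℤ)) = _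
    rw [hF, shift ((m:ℕ):ℤ) k]
    simp only
    congr 2
    push_cast
    ring
  constructor
  · rw [← HSe.tsum_eq, Summable.tsum_prod' HSe.summable (fun m => HSe.summable.prod_factor m),
      tsum_fintype]
    rw [← Fin.sum_univ_eq_sum_range (fun m => ∑' k : ℤ,
      Complex.exp (2 * Real.pi * Complex.I * ((n : ℂ) * (k : ℂ) + (m : ℂ)) * (x1 : ℂ))
        * fourierCoef f (m : ℤ) (x2 + (k : ℝ))) n.natAbs]
    apply Finset.sum_congr rfl
    intro m _
    apply tsum_congr
    intro k
    exact hterm m k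
  · intro m hm
    have h1 : Summable (fun j : ℤ => ‖F j‖) := summable_norm_iff.mpr HSF.summable
    have hinj : Function.Injective (fun k : ℤ => n * k + (m : ℤ)) := by
      intro a b h
      simp only [add_left_inj] at h
      exact mul_left_cancel₀ hn h
    have h2 := h1.comp_injective hinj
    apply h2.congr
    intro k
    show ‖F (n * k + (m:ℤ))‖ = _
    rw [hF, shift (m:ℤ) k]
    simp only
    congr 3
    push_cast
    ring
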